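/- arXiv:2004.14841 — 3 statements merged into one kernel-verified Lean document; each statement's English description precedes it below -/
import Mathlib

section
/- Let (f_n) be a sequence of convex functions from ℝ^d to ℝ converging pointwise to a function f on ℝ^d. Then the convergence is uniform on every compact subset K of ℝ^d. -/
/-!
A convergent sequence of reals is bounded, so the `f n` are bounded at each point. By the maximum
principle a convex function is bounded on the convex hull of a finite set by its values there, and
in finite dimensions every ball lies in such a hull: the `f n` are uniformly bounded above on balls,
and, by midpoint convexity around the centre, also below. A convex function bounded on a ball is
Lipschitz on a smaller ball with a constant depending only on the bound, so the `f n` are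
equi-Lipschitz on `K`; for an equicontinuous family, pointwise convergence is uniform on compacts.
-/

open Filter Set Metric Bornology Topology

theorem EquicontinuousOn.tendstoUniformlyOn_of_tendsto {ι X α : Type*} [TopologicalSpace X]
    [UniformSpace α] {F : ι → X → α} {f : X → α} {p : Filter ι} {K : Set X}
    (hF : EquicontinuousOn F K) (hK : IsCompact K)
    (h : ∀ x ∈ K, Tendsto (fun i => F i x) p (𝓝 (f x))) : TendstoUniformlyOn F f p K := by
  have := (EquicontinuousOn.tendsto_uniformOnFun_iff_pi' (𝔖 := {K}) (by simpa using hK)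
    (by simpa using hF) p f).2 ?_
  · rw [UniformOnFun.tendsto_iff_tendstoUniformlyOn] at this
    exact this K rfl
  · rw [sUnion_singleton, tendsto_pi_nhds]
    rintro ⟨x, hx⟩
    exact h x hx

lemma exists_forall_convexHull_le_of_convexOn {ι E : Type*} [AddCommGroup E] [Module ℝ E]
    {F : ι → E → ℝ} {s t : Set E} (hF : ∀ i, ConvexOn ℝ s (F i)) (hts : t ⊆ s) (ht : t.Finite)
    (hbdd : ∀ x ∈ t, BddAbove (range fun i => F i x)) :
    ∃ M, ∀ i, ∀ x ∈ convexHull ℝ t, F i x ≤ M := by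
  obtain ⟨M, hM⟩ := (ht.bddAbove_biUnion (S := fun x => range fun i => F i x)).2 hbdd
  refine ⟨M, fun i x hx => ?_⟩
  obtain ⟨y, hy, hxy⟩ := (hF i).exists_ge_of_mem_convexHull hts hx
  exact hxy.trans (hM (mem_biUnion hy (mem_range_self i)))

section Normed

variable {E : Type*} [NormedAddCommGroup E] [NormedSpace ℝ E]

lemma ConvexOn.abs_le_of_forall_le_on_ball {f : E → ℝ} {x₀ : E} {r M : ℝ}
    (hf : ConvexOn ℝ (ball x₀ r) f) (hM : ∀ x ∈ ball x₀ r, f x ≤ M) :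
    ∀ x ∈ ball x₀ r, |f x| ≤ M + 2 * |f x₀| := by
  intro x hx
  have hy : x₀ + (x₀ - x) ∈ ball x₀ r := by
    rwa [mem_ball, dist_eq_norm, add_sub_cancel_left, ← dist_eq_norm, dist_comm]
  have hmid : f x₀ ≤ (1 / 2 : ℝ) * f x + (1 / 2 : ℝ) * f (x₀ + (x₀ - x)) := by
    have h := hf.2 hx hy (by norm_num : (0 : ℝ) ≤ 1 / 2) (by norm_num : (0 : ℝ) ≤ 1 / 2)
      (by norm_num)
    rwa [show (1 / 2 : ℝ) • x + (1 / 2 : ℝ) • (x₀ + (x₀ - x)) = x₀ by module] at h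
  rw [abs_le]
  constructor <;> linarith [hM x hx, hM _ hy, neg_abs_le (f x₀), abs_nonneg (f x₀)]

variable [FiniteDimensional ℝ E]

lemma IsCompact.exists_finite_subset_convexHull {K : Set E} (hK : IsCompact K) :
    ∃ t : Set E, t.Finite ∧ K ⊆ convexHull ℝ t := by
  choose b hb _ using fun x : E => exists_mem_interior_convexHull_affineBasis (univ_mem (f := 𝓝 x))
  obtain ⟨s, -, hKs⟩ := hK.elim_nhds_subcover (fun x => convexHull ℝ (range (b x)))
    fun x _ => mem_interior_iff_mem_nhds.1 (hb x)
  refine ⟨⋃ x ∈ s, range (b x), s.finite_toSet.biUnion fun x _ => finite_range _, ?_⟩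
  exact hKs.trans <| iUnion₂_subset fun x hx =>
    convexHull_mono (subset_biUnion_of_mem (u := fun x => range (b x)) hx)

lemma exists_lipschitzOnWith_of_convexOn_of_isBounded {ι : Type*} {F : ι → E → ℝ}
    (hF : ∀ i, ConvexOn ℝ univ (F i)) (hbdd : ∀ x, IsBounded (range fun i => F i x))
    {s : Set E} (hs : IsBounded s) : ∃ L, ∀ i, LipschitzOnWith L (F i) s := by
  obtain ⟨R, hsR⟩ := hs.subset_ball (0 : E)
  obtain ⟨t, ht, hRt⟩ := (isCompact_closedBall (0 : E) (R + 1)).exists_finite_subset_convexHull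
  obtain ⟨M, hM⟩ := exists_forall_convexHull_le_of_convexOn hF (subset_univ t) ht
    fun x _ => (hbdd x).bddAbove
  obtain ⟨c, hc⟩ := isBounded_iff_forall_norm_le.1 (hbdd 0)
  have hF_ball i : ConvexOn ℝ (ball 0 (R + 1)) (F i) :=
    (hF i).subset (subset_univ _) (convex_ball _ _)
  have habs i x (hx : dist x 0 < R + 1) : |F i x| ≤ M + 2 * c := by
    refine ((hF_ball i).abs_le_of_forall_le_on_ball
      (fun y hy => hM i y (hRt (ball_subset_closedBall hy))) x hx).trans ?_
    have hc₀ : |F i 0| ≤ c := hc _ (mem_range_self i)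
    linarith
  refine ⟨(2 * (M + 2 * c) / 1).toNNReal, fun i => ?_⟩
  have hLip := (hF_ball i).lipschitzOnWith_of_abs_le one_pos (habs i)
  rw [add_sub_cancel_right] at hLip
  exact hLip.mono hsR

end Normed

theorem convex_pointwise_to_uniform_on_compact (d : ℕ)
    (f : ℕ → (Fin d → ℝ) → ℝ) (g : (Fin d → ℝ) → ℝ)
    (hconv : ∀ n, ConvexOn ℝ Set.univ (f n))
    (hptwise : ∀ x, Tendsto (fun n => f n x) atTop (nhds (g x)))
    (K : Set (Fin d → ℝ)) (hK : IsCompact K) :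
    TendstoUniformlyOn f g atTop K := by
  obtain ⟨L, hL⟩ := exists_lipschitzOnWith_of_convexOn_of_isBounded hconv
    (fun x => isBounded_range_of_tendsto _ (hptwise x)) hK.isBounded
  exact (LipschitzOnWith.uniformEquicontinuousOn f L hL).equicontinuousOn
    |>.tendstoUniformlyOn_of_tendsto hK fun x _ => hptwise x
end

section
/- Let K ⊆ ℝ^d be a nonempty compact convex set, f_n : K → ℝ random convex functions such that sup_{x∈K}|f_n(x) - f(x)| → 0 in probability, where f is strictly convex with minimizer x* in K. Then the (unique whenever it exists) minimizer x_n of f_n on K converges to x* in probability. -/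
/-! A continuous function with a unique minimiser on a compact set has a well-separated minimum:
outside any open neighbourhood `U` of the minimiser it stays above its minimum by a margin `3δ`.
A function uniformly `δ`-close to it therefore cannot attain its minimum outside `U`, so the event
that the minimiser of `fn n` is far from `xstar` is contained in the event that `fn n` is far from
`f` uniformly on `K`, whose probability tends to zero. Strict convexity only provides uniqueness
of the minimiser. -/

open MeasureTheory Filter Topology

theorem IsCompact.forall_isMinOn_mem_of_abs_sub_le {β : Type*} [TopologicalSpace β]
    {K U : Set β} {f : β → ℝ} {x₀ : β} (hK : IsCompact K) (hf : ContinuousOn f K)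
    (hU : IsOpen U) (hx₀ : x₀ ∈ K) (hsep : ∀ y ∈ K \ U, f x₀ < f y) :
    ∃ δ > 0, ∀ g : β → ℝ, (∀ y ∈ K, |g y - f y| ≤ δ) →
      ∀ y ∈ K, IsMinOn g K y → y ∈ U := by
  obtain ⟨a, hx₀a, ha⟩ :=
    (hK.diff hU).exists_forall_le' (hf.mono Set.sdiff_subset) hsep
  refine ⟨(a - f x₀) / 3, by linarith, fun g hg y hy hgy => ?_⟩
  by_contra hyU
  have hay : a ≤ f y := ha y ⟨hy, hyU⟩
  have hgy_le : g y ≤ g x₀ := hgy hx₀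
  have hy_close := abs_le.1 (hg y hy)
  have hx₀_close := abs_le.1 (hg x₀ hx₀)
  linarith [hy_close.1, hx₀_close.2]

theorem StrictConvexOn.lt_of_isMinOn_of_ne {E : Type*} [AddCommGroup E] [Module ℝ E]
    {K : Set E} {f : E → ℝ} {x y : E} (hf : StrictConvexOn ℝ K f) (hmin : IsMinOn f K x)
    (hx : x ∈ K) (hy : y ∈ K) (hne : y ≠ x) : f x < f y := by
  refine (hmin hy).lt_of_ne fun hxy => hne ?_
  have hmin_y : IsMinOn f K y := fun z hz => hxy ▸ hmin hz
  exact hf.eq_of_isMinOn hmin_y hmin hy hx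

theorem tendsto_toReal_measure_of_subset {ι Ω : Type*} [MeasurableSpace Ω] {μ : Measure Ω}
    [IsFiniteMeasure μ] {l : Filter ι} {A B : ι → Set Ω} (hAB : ∀ i, A i ⊆ B i)
    (hB : Tendsto (fun i => (μ (B i)).toReal) l (𝓝 0)) :
    Tendsto (fun i => (μ (A i)).toReal) l (𝓝 0) :=
  squeeze_zero (fun _ => ENNReal.toReal_nonneg)
    (fun i => ENNReal.toReal_mono (measure_ne_top μ _) (measure_mono (hAB i))) hB

theorem random_argmin_converges_in_probability_general (d : ℕ)
    {Ω : Type*} [MeasurableSpace Ω] (μ : Measure Ω) [IsProbabilityMeasure μ]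
    (K : Set (Fin d → ℝ)) (hK : IsCompact K)
    (f : (Fin d → ℝ) → ℝ) (hf : ContinuousOn f K) (hfconv : StrictConvexOn ℝ K f)
    (xstar : Fin d → ℝ) (hxstar : xstar ∈ K) (hmin : ∀ y ∈ K, f xstar ≤ f y)
    (fn : ℕ → Ω → (Fin d → ℝ) → ℝ)
    (hunif : ∀ ε > 0, Tendsto
      (fun n => (μ {ω | ∃ x ∈ K, ε < |fn n ω x - f x|}).toReal) atTop (nhds 0))
    (x : ℕ → Ω → (Fin d → ℝ))
    (hx : ∀ n ω, x n ω ∈ K ∧ ∀ y ∈ K, fn n ω (x n ω) ≤ fn n ω y) :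
    ∀ ε > 0, Tendsto
      (fun n => (μ {ω | ε < dist (x n ω) xstar}).toReal) atTop (nhds 0) := by
  intro ε hε
  have hsep : ∀ y ∈ K \ Metric.ball xstar ε, f xstar < f y := fun y hy =>
    hfconv.lt_of_isMinOn_of_ne hmin hxstar hy.1
      (by rintro rfl; exact hy.2 (Metric.mem_ball_self hε))
  obtain ⟨δ, hδ, hstable⟩ :=
    hK.forall_isMinOn_mem_of_abs_sub_le hf Metric.isOpen_ball hxstar hsep
  refine tendsto_toReal_measure_of_subset (fun n ω hfar => ?_) (hunif δ hδ)
  by_contra hfn_far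
  have hclose : ∀ y ∈ K, |fn n ω y - f y| ≤ δ := fun y hy =>
    not_lt.1 fun h => hfn_far ⟨y, hy, h⟩
  have hnear := hstable (fn n ω) hclose (x n ω) (hx n ω).1 (hx n ω).2
  exact (Metric.mem_ball.1 hnear).not_gt hfar

theorem random_argmin_converges_in_probability (d : ℕ)
    {Ω : Type*} [MeasurableSpace Ω] (μ : Measure Ω) [IsProbabilityMeasure μ]
    (K : Set (Fin d → ℝ)) (hKne : K.Nonempty) (hK : IsCompact K) (hKconv : Convex ℝ K)
    (f : (Fin d → ℝ) → ℝ) (hf : ContinuousOn f K) (hfconv : StrictConvexOn ℝ K f)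
    (xstar : Fin d → ℝ) (hxstar : xstar ∈ K) (hmin : ∀ y ∈ K, f xstar ≤ f y)
    (fn : ℕ → Ω → (Fin d → ℝ) → ℝ)
    (hfnconv : ∀ n ω, ConvexOn ℝ K (fn n ω))
    (hunif : ∀ ε > 0, Tendsto
      (fun n => (μ {ω | ∃ x ∈ K, ε < |fn n ω x - f x|}).toReal) atTop (nhds 0))
    (x : ℕ → Ω → (Fin d → ℝ))
    (hx : ∀ n ω, x n ω ∈ K ∧ ∀ y ∈ K, fn n ω (x n ω) ≤ fn n ω y) :
    ∀ ε > 0, Tendsto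
      (fun n => (μ {ω | ε < dist (x n ω) xstar}).toReal) atTop (nhds 0) :=
  random_argmin_converges_in_probability_general d μ K hK f hf hfconv xstar hxstar hmin fn hunif x
    hx
end

section
/- Let (p̂_n(P))_{P∈Π} and (p̂_n'(P))_{P∈Π} be two families of random variables, each converging in probability to the same constants p*(P), with p_0 ∉ {p*(P) : P ∈ Π} and {P : p*(P) > p_0} nonempty, where Π is finite. Then the Dice-Sorensen index between the random sets Ŝ_n = {P : p̂_n(P) > p_0} and Ŝ_n' = {P : p̂_n'(P) > p_0} converges to 1 in probability. -/
/-!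
If every estimate lies within half its margin `|p*(P) - p₀|` of its limit, then it falls on the
same side of `p₀` as the limit, so both random sets coincide with `{P | p₀ < p*(P)}` and their
Dice-Sorensen index is `1`. The bad event is therefore covered by finitely many deviation events,
each of vanishing probability.
-/

open MeasureTheory Filter

/-- Dice-Sorensen index of two finite sets, with the convention that it equals 1
when both sets are empty. -/
noncomputable def diceIndex {α : Type*} [DecidableEq α] (A B : Finset α) : ℝ :=
  if A.card + B.card = 0 then 1
  else 2 * ((A ∩ B).card : ℝ) / (A.card + B.card)

open Topology

theorem diceIndex_self {α : Type*} [DecidableEq α] (A : Finset α) : diceIndex A A = 1 := by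
  unfold diceIndex
  split_ifs with h
  · rfl
  · have hA : (A.card : ℝ) ≠ 0 := by exact_mod_cast fun h' => h (by omega)
    rw [Finset.inter_self]
    field_simp
    ring

theorem lt_iff_lt_of_abs_sub_lt_abs_sub {x y c : ℝ} (h : |x - y| < |y - c|) :
    c < x ↔ c < y := by
  rcases lt_or_ge c y with hcy | hyc
  · rw [abs_of_pos (sub_pos.2 hcy)] at h
    exact iff_of_true (by linarith [neg_abs_le (x - y)]) hcy
  · rw [abs_of_nonpos (sub_nonpos.2 hyc)] at h
    exact iff_of_false (by linarith [le_abs_self (x - y)]) hyc.not_gt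

section MeasureReal

variable {Ω ι : Type*} [MeasurableSpace Ω] {μ : Measure Ω} {l : Filter ι}

theorem tendsto_measureReal_of_subset [IsFiniteMeasure μ] {s t : ι → Set Ω}
    (hst : ∀ i, s i ⊆ t i) (ht : Tendsto (fun i => μ.real (t i)) l (𝓝 0)) :
    Tendsto (fun i => μ.real (s i)) l (𝓝 0) :=
  squeeze_zero (fun _ => measureReal_nonneg) (fun i => measureReal_mono (hst i)) ht

theorem tendsto_measureReal_union {s t : ι → Set Ω}
    (hs : Tendsto (fun i => μ.real (s i)) l (𝓝 0)) (ht : Tendsto (fun i => μ.real (t i)) l (𝓝 0)) :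
    Tendsto (fun i => μ.real (s i ∪ t i)) l (𝓝 0) :=
  squeeze_zero (fun _ => measureReal_nonneg) (fun i => measureReal_union_le _ _)
    (by simpa using hs.add ht)

theorem tendsto_measureReal_iUnion_fintype {β : Type*} [Fintype β] {s : β → ι → Set Ω}
    (hs : ∀ b, Tendsto (fun i => μ.real (s b i)) l (𝓝 0)) :
    Tendsto (fun i => μ.real (⋃ b, s b i)) l (𝓝 0) :=
  squeeze_zero (fun _ => measureReal_nonneg) (fun i => measureReal_iUnion_fintype_le _)
    (by simpa using tendsto_finsetSum Finset.univ fun b _ => hs b)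

theorem tendsto_measureReal_not_lt_iff_lt [IsFiniteMeasure μ] {X : ι → Ω → ℝ} {y c : ℝ}
    (hyc : y ≠ c) (hX : ∀ ε > 0, Tendsto (fun i => μ.real {ω | ε < |X i ω - y|}) l (𝓝 0)) :
    Tendsto (fun i => μ.real {ω | ¬(c < X i ω ↔ c < y)}) l (𝓝 0) := by
  have hmargin : 0 < |y - c| := abs_pos.2 (sub_ne_zero.2 hyc)
  refine tendsto_measureReal_of_subset (fun i ω hω => ?_) (hX _ (half_pos hmargin))
  by_contra hclose
  exact hω (lt_iff_lt_of_abs_sub_lt_abs_sub ((not_lt.1 hclose).trans_lt (half_lt_self hmargin)))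

end MeasureReal

open Classical in
theorem sirus_asymptotic_stability_general {Paths : Type*} [Fintype Paths] [DecidableEq Paths]
    {Ω : Type*} [MeasurableSpace Ω] (μ : Measure Ω) [IsProbabilityMeasure μ]
    (phat phat' : ℕ → Paths → Ω → ℝ) (pstar : Paths → ℝ) (p₀ : ℝ)
    (hne : ∀ P, pstar P ≠ p₀)
    (hconv : ∀ P, ∀ ε > 0, Tendsto
      (fun n => (μ {ω | ε < |phat n P ω - pstar P|}).toReal) atTop (nhds 0))
    (hconv' : ∀ P, ∀ ε > 0, Tendsto
      (fun n => (μ {ω | ε < |phat' n P ω - pstar P|}).toReal) atTop (nhds 0)) :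
    ∀ ε > 0, Tendsto
      (fun n => (μ {ω | ε <
        |diceIndex (Finset.univ.filter (fun P => p₀ < phat n P ω))
            (Finset.univ.filter (fun P => p₀ < phat' n P ω)) - 1|}).toReal)
      atTop (nhds 0) := by
  intro ε hε
  have hbad : ∀ n, {ω | ε < |diceIndex (Finset.univ.filter (fun P => p₀ < phat n P ω))
      (Finset.univ.filter (fun P => p₀ < phat' n P ω)) - 1|} ⊆
      (⋃ P, {ω | ¬(p₀ < phat n P ω ↔ p₀ < pstar P)}) ∪
        ⋃ P, {ω | ¬(p₀ < phat' n P ω ↔ p₀ < pstar P)} := by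
    intro n ω hω
    by_contra hgood
    simp only [Set.mem_union, Set.mem_iUnion, Set.mem_ofPred_eq, not_or, not_exists,
      not_not] at hgood
    rw [Set.mem_ofPred_eq, Finset.filter_congr fun P _ => hgood.1 P,
      Finset.filter_congr fun P _ => hgood.2 P, diceIndex_self, sub_self, abs_zero] at hω
    exact hε.not_gt hω
  refine tendsto_measureReal_of_subset hbad (tendsto_measureReal_union ?_ ?_) <;>
    refine tendsto_measureReal_iUnion_fintype fun P =>
      tendsto_measureReal_not_lt_iff_lt (hne P) ?_
  exacts [hconv P, hconv' P]

open Classical in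
theorem sirus_asymptotic_stability {Paths : Type*} [Fintype Paths] [DecidableEq Paths]
    {Ω : Type*} [MeasurableSpace Ω] (μ : Measure Ω) [IsProbabilityMeasure μ]
    (phat phat' : ℕ → Paths → Ω → ℝ) (pstar : Paths → ℝ) (p₀ : ℝ)
    (hpstar : ∀ P, pstar P ∈ Set.Icc (0 : ℝ) 1)
    (hp₀ : p₀ ∈ Set.Icc (0 : ℝ) 1) (hne : ∀ P, pstar P ≠ p₀)
    (hnonempty : ∃ P, p₀ < pstar P)
    (hmeas : ∀ n P, Measurable (phat n P)) (hmeas' : ∀ n P, Measurable (phat' n P))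
    (hconv : ∀ P, ∀ ε > 0, Tendsto
      (fun n => (μ {ω | ε < |phat n P ω - pstar P|}).toReal) atTop (nhds 0))
    (hconv' : ∀ P, ∀ ε > 0, Tendsto
      (fun n => (μ {ω | ε < |phat' n P ω - pstar P|}).toReal) atTop (nhds 0)) :
    ∀ ε > 0, Tendsto
      (fun n => (μ {ω | ε <
        |diceIndex (Finset.univ.filter (fun P => p₀ < phat n P ω))
            (Finset.univ.filter (fun P => p₀ < phat' n P ω)) - 1|}).toReal)
      atTop (nhds 0) :=
  sirus_asymptotic_stability_general μ phat phat' pstar p₀ hne hconv hconv'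
end
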